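/- Let I ⊆ ℝ² be a finite set of ideal points with |I| odd and let B(c,r) be a yolk of I with r > 0. Then there exist three unit vectors a₁, a₂, a₃ ∈ ℝ² such that each (aᵢ, ⟪aᵢ,c⟫ + r) is a median hyperplane of I (hence tangent to B(c,r)), and for every α ∈ ℝ² there is some i ∈ {1,2,3} with ⟪aᵢ,α⟫ ≥ 0. -/

import Mathlib

open scoped RealInnerProductSpace
open Real

noncomputable section

/-- Points of Euclidean space `ℝ^k`. -/
abbrev Pt (k : ℕ) := EuclideanSpace ℝ (Fin k)

/-- `(a, b)` (with `‖a‖ = 1`) is a median hyperplane for the finite set of ideal points `I`: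
at least `|I|/2` points are on each closed side. -/
def IsMedianHyperplane {k : ℕ} (I : Finset (Pt k)) (a : Pt k) (b : ℝ) : Prop :=
  ‖a‖ = 1 ∧
    (I.card : ℝ) / 2 ≤ ((I.filter fun x => ⟪a, x⟫ ≤ b).card : ℝ) ∧
    (I.card : ℝ) / 2 ≤ ((I.filter fun x => b ≤ ⟪a, x⟫).card : ℝ)

/-- A limiting median hyperplane for `I ⊆ ℝ^k` is a median hyperplane containing at least
`k` points of `I`. -/
def IsLimitingMedianHyperplane {k : ℕ} (I : Finset (Pt k)) (a : Pt k) (b : ℝ) : Prop :=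
  IsMedianHyperplane I a b ∧ k ≤ (I.filter fun x => ⟪a, x⟫ = b).card

/-- The yolk radius: infimum of `r ≥ 0` such that some closed ball `B(c,r)` intersects
every median hyperplane of `I` (the ball `B(c,r)` meets `H(a,b)` iff `|⟪a,c⟫ - b| ≤ r`). -/
def yolkRadius {k : ℕ} (I : Finset (Pt k)) : ℝ :=
  sInf {r : ℝ | 0 ≤ r ∧ ∃ c : Pt k, ∀ a b, IsMedianHyperplane I a b → |⟪a, c⟫ - b| ≤ r}

/-- The LP yolk radius: infimum of `r ≥ 0` such that some closed ball `B(c,r)` intersects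
every limiting median hyperplane of `I`. -/
def lpYolkRadius {k : ℕ} (I : Finset (Pt k)) : ℝ :=
  sInf {r : ℝ | 0 ≤ r ∧ ∃ c : Pt k, ∀ a b, IsLimitingMedianHyperplane I a b → |⟪a, c⟫ - b| ≤ r}

/-- `B(c,r)` is a yolk of `I`: it intersects every median hyperplane, and every closed ball
intersecting every median hyperplane has radius at least `r`. -/
def IsYolk {k : ℕ} (I : Finset (Pt k)) (c : Pt k) (r : ℝ) : Prop :=
  (∀ a b, IsMedianHyperplane I a b → |⟪a, c⟫ - b| ≤ r) ∧
  ∀ (c' : Pt k) (r' : ℝ),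
    (∀ a b, IsMedianHyperplane I a b → |⟪a, c'⟫ - b| ≤ r') → r ≤ r'

/-- `B(c,r)` is an LP yolk of `I`: it intersects every limiting median hyperplane, and every
closed ball intersecting every limiting median hyperplane has radius at least `r`. -/
def IsLPYolk {k : ℕ} (I : Finset (Pt k)) (c : Pt k) (r : ℝ) : Prop :=
  (∀ a b, IsLimitingMedianHyperplane I a b → |⟪a, c⟫ - b| ≤ r) ∧
  ∀ (c' : Pt k) (r' : ℝ),
    (∀ a b, IsLimitingMedianHyperplane I a b → |⟪a, c'⟫ - b| ≤ r') → r ≤ r'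

/-! If every tangent median hyperplane `(a, ⟪a, c⟫ + r)` had `⟪a, v⟫ > 0`, moving the centre to
`c + t • v` for small `t > 0` would push every median hyperplane strictly inside the ball:
the median hyperplanes form a compact family (the counting conditions are closed and the ball
bounds the offsets), invariant under `(a, b) ↦ (-a, -b)`, so a uniformly smaller radius would
suffice, contradicting minimality of the yolk. Hence the compact set of tangent normals meets
every half-space `⟪·, v⟫ ≤ 0`, so by separation `0` lies in its convex hull, and by
Carathéodory `0` is a convex combination of three tangent normals `a₁, a₂, a₃`. A direction `α`
with every `⟪aᵢ, α⟫ < 0` would then give `⟪0, α⟫ < 0`. -/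

theorem Function.Injective.sum_extend_zero {ι κ M : Type*} [Fintype ι] [Fintype κ]
    [AddCommMonoid M] {e : ι → κ} (he : Function.Injective e) (F : ι → M) :
    ∑ j, Function.extend e F (0 : κ → M) j = ∑ i, F i := by
  classical
  rw [← Finset.sum_subset (Finset.subset_univ (Finset.univ.image e)), Finset.sum_image]
  · exact Finset.sum_congr rfl fun i _ => he.extend_apply F _ i
  · exact fun i _ j _ hij => he hij
  · intro j _ hj
    refine Function.extend_apply' F _ j fun ⟨i, hi⟩ => hj ?_
    exact Finset.mem_image.2 ⟨i, Finset.mem_univ i, hi⟩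

theorem exists_fin_finrank_succ_of_mem_convexHull {E : Type*} [AddCommGroup E] [Module ℝ E]
    [FiniteDimensional ℝ E] {s : Set E} {x : E} (hx : x ∈ convexHull ℝ s) :
    ∃ w ∈ stdSimplex ℝ (Fin (Module.finrank ℝ E + 1)), ∃ z : Fin (Module.finrank ℝ E + 1) → E,
      (∀ i, z i ∈ s) ∧ ∑ i, w i • z i = x := by
  obtain ⟨ι, _, z, w, hzs, hz, hw0, hw1, hwz⟩ := eq_pos_convex_span_of_mem_convexHull hx
  obtain ⟨e⟩ : Nonempty (ι ↪ Fin (Module.finrank ℝ E + 1)) :=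
    Function.Embedding.nonempty_of_card_le (by
      simpa using hz.card_le_finrank_succ.trans (by gcongr; exact Submodule.finrank_le _))
  obtain ⟨y, hy⟩ := convexHull_nonempty_iff.1 ⟨x, hx⟩
  have hsmul : ∀ j, Function.extend e w 0 j • Function.extend e z (fun _ => y) j =
      Function.extend e (fun i => w i • z i) 0 j := by
    intro j
    by_cases hj : ∃ i, e i = j
    · obtain ⟨i, rfl⟩ := hj
      simp only [e.injective.extend_apply]
    · simp only [Function.extend_apply' _ _ _ hj, Pi.zero_apply, zero_smul]
  refine ⟨Function.extend e w 0, ⟨fun j => ?_, ?_⟩, Function.extend e z fun _ => y, fun j => ?_, ?_⟩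
  · by_cases hj : ∃ i, e i = j
    · obtain ⟨i, rfl⟩ := hj
      simpa only [e.injective.extend_apply] using (hw0 i).le
    · simp only [Function.extend_apply' _ _ _ hj, Pi.zero_apply, le_refl]
  · rw [e.injective.sum_extend_zero, hw1]
  · by_cases hj : ∃ i, e i = j
    · obtain ⟨i, rfl⟩ := hj
      simpa only [e.injective.extend_apply] using hzs (Set.mem_range_self i)
    · simpa only [Function.extend_apply' _ _ _ hj] using hy
  · simp only [hsmul, e.injective.sum_extend_zero, hwz]

theorem IsCompact.convexHull {E : Type*} [AddCommGroup E] [Module ℝ E] [TopologicalSpace E]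
    [ContinuousAdd E] [ContinuousSMul ℝ E] [FiniteDimensional ℝ E] {s : Set E}
    (hs : IsCompact s) : IsCompact (_root_.convexHull ℝ s) := by
  set n := Module.finrank ℝ E + 1
  have hconv : _root_.convexHull ℝ s = (fun p : (Fin n → ℝ) × (Fin n → E) => ∑ i, p.1 i • p.2 i) ''
      (stdSimplex ℝ (Fin n) ×ˢ Set.univ.pi fun _ => s) := by
    ext x
    constructor
    · intro hx
      obtain ⟨w, hw, z, hz, rfl⟩ := exists_fin_finrank_succ_of_mem_convexHull hx
      exact ⟨(w, z), ⟨hw, fun i _ => hz i⟩, rfl⟩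
    · rintro ⟨⟨w, z⟩, ⟨hw, hz⟩, rfl⟩
      exact mem_convexHull_of_exists_fintype w z hw.1 hw.2 (fun i => hz i trivial) rfl
  rw [hconv]
  exact ((isCompact_stdSimplex ℝ _).prod (isCompact_univ_pi fun _ => hs)).image (by fun_prop)

section InnerProduct

variable {E : Type*} [NormedAddCommGroup E] [InnerProductSpace ℝ E]

theorem zero_mem_convexHull_of_forall_exists_inner_nonpos [FiniteDimensional ℝ E] {s : Set E}
    (hs : IsCompact s) (h : ∀ v, ∃ a ∈ s, ⟪a, v⟫ ≤ 0) : (0 : E) ∈ convexHull ℝ s := by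
  by_contra h0
  obtain ⟨f, u, hf0, hfu⟩ :=
    geometric_hahn_banach_point_closed (convex_convexHull ℝ s) hs.convexHull.isClosed h0
  obtain ⟨a, ha, hav⟩ := h ((InnerProductSpace.toDual ℝ E).symm f)
  rw [real_inner_comm, InnerProductSpace.toDual_symm_apply] at hav
  linarith [hfu a (subset_convexHull ℝ s ha), map_zero f]

theorem exists_inner_nonneg_of_sum_smul_eq_zero {ι : Type*} [Fintype ι] {w : ι → ℝ}
    (hw : w ∈ stdSimplex ℝ ι) {z : ι → E} (hwz : ∑ i, w i • z i = 0) (α : E) :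
    ∃ i, 0 ≤ ⟪z i, α⟫ := by
  by_contra! hneg
  have hsub : convexHull ℝ (Set.range z) ⊆ {x | ⟪α, x⟫ < 0} := by
    refine convexHull_min (Set.range_subset_iff.2 fun i => ?_)
      (convex_halfSpace_lt (innerₛₗ ℝ α).isLinear 0)
    rw [Set.mem_ofPred_eq, real_inner_comm]
    exact hneg i
  have h0 := hsub (mem_convexHull_of_exists_fintype w z hw.1 hw.2 Set.mem_range_self hwz)
  simp at h0

end InnerProduct

theorem half_le_natCast_iff (n k : ℕ) : (n : ℝ) / 2 ≤ k ↔ (n + 1) / 2 ≤ k := by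
  rw [div_le_iff₀ two_pos, ← Nat.cast_ofNat, ← Nat.cast_mul, Nat.cast_le]
  omega

theorem isClosed_setOf_le_card_filter {X α : Type*} [TopologicalSpace X] (s : Finset α)
    {P : X → α → Prop} [∀ p, DecidablePred (P p)] (hP : ∀ x, IsClosed {p | P p x}) (m : ℕ) :
    IsClosed {p | m ≤ (s.filter (P p)).card} := by
  have hunion : {p | m ≤ (s.filter (P p)).card} =
      ⋃ t ∈ s.powerset.filter (m ≤ ·.card), ⋂ x ∈ t, {p | P p x} := by
    ext p
    simp only [Set.mem_ofPred_eq, Set.mem_iUnion, Set.mem_iInter, Finset.mem_filter,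
      Finset.mem_powerset, exists_prop]
    constructor
    · exact fun h => ⟨s.filter (P p), ⟨Finset.filter_subset _ _, h⟩,
        fun x hx => (Finset.mem_filter.1 hx).2⟩
    · rintro ⟨t, ⟨hts, hm⟩, ht⟩
      exact hm.trans (Finset.card_le_card fun x hx => Finset.mem_filter.2 ⟨hts hx, ht x hx⟩)
  rw [hunion]
  exact isClosed_biUnion_finset fun t _ => isClosed_biInter fun x _ => hP x

theorem IsCompact.exists_pos_forall_add_mul_pos {X : Type*} [TopologicalSpace X] {K : Set X}
    (hK : IsCompact K) {f g : X → ℝ} (hf : Continuous f) (hg : Continuous g)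
    (hf0 : ∀ p ∈ K, 0 ≤ f p) (hfg : ∀ p ∈ K, f p = 0 → 0 < g p) :
    ∃ t > 0, ∀ p ∈ K, 0 < f p + t * g p := by
  obtain ⟨B, hB⟩ := hK.exists_bound_of_continuousOn hg.continuousOn
  obtain ⟨η, hη, hηf⟩ := (hK.inter_right (isClosed_le hg continuous_const)).exists_forall_le'
    hf.continuousOn (a := 0) fun p ⟨hp, hgp⟩ =>
      (hf0 p hp).lt_of_ne' fun h => (hfg p hp h).not_ge hgp
  -- `η` bounds `f` from below where `g ≤ 0`, and `t * |g| ≤ η / 2` on `K`.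
  set t := η / (2 * (|B| + 1))
  have ht : 0 < t := by positivity
  refine ⟨t, ht, fun p hp => ?_⟩
  rcases lt_or_ge 0 (g p) with hgp | hgp
  · nlinarith [hf0 p hp]
  · have hgB : -(|B| + 1) ≤ g p := by
      linarith [neg_abs_le (g p), (Real.norm_eq_abs _ ▸ hB p hp : |g p| ≤ B), le_abs_self B]
    have htB : t * (|B| + 1) = η / 2 := by
      change η / (2 * (|B| + 1)) * (|B| + 1) = η / 2
      field_simp
    nlinarith [hηf p ⟨hp, hgp⟩]

section Median

variable {k : ℕ} {I : Finset (Pt k)}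

def medianHyperplanes (I : Finset (Pt k)) : Set (Pt k × ℝ) :=
  {p | IsMedianHyperplane I p.1 p.2}

def tangentMedianDirections (I : Finset (Pt k)) (c : Pt k) (r : ℝ) : Set (Pt k) :=
  {a | IsMedianHyperplane I a (⟪a, c⟫ + r)}

theorem IsMedianHyperplane.neg {a : Pt k} {b : ℝ} (h : IsMedianHyperplane I a b) :
    IsMedianHyperplane I (-a) (-b) := by
  obtain ⟨ha, hle, hge⟩ := h
  refine ⟨by rwa [norm_neg], ?_, ?_⟩ <;> simpa only [inner_neg_left, neg_le_neg_iff]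

theorem isClosed_medianHyperplanes (I : Finset (Pt k)) : IsClosed (medianHyperplanes I) := by
  simp only [medianHyperplanes, IsMedianHyperplane, half_le_natCast_iff, Set.ofPred_and]
  refine (isClosed_eq (by fun_prop) continuous_const).inter (.inter ?_ ?_) <;>
    exact isClosed_setOf_le_card_filter I (fun x => isClosed_le (by fun_prop) (by fun_prop)) _

theorem isCompact_tangentMedianDirections (I : Finset (Pt k)) (c : Pt k) (r : ℝ) :
    IsCompact (tangentMedianDirections I c r) :=
  (isCompact_sphere 0 1).of_isClosed_subset
    ((isClosed_medianHyperplanes I).preimage (f := fun a => (a, ⟪a, c⟫ + r)) (by fun_prop))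
    fun _ ha => mem_sphere_zero_iff_norm.2 ha.1

theorem isCompact_medianHyperplanes_of_forall_abs_le {c : Pt k} {r : ℝ}
    (h : ∀ a b, IsMedianHyperplane I a b → |⟪a, c⟫ - b| ≤ r) :
    IsCompact (medianHyperplanes I) := by
  refine ((isCompact_sphere 0 1).prod (isCompact_Icc (a := -(‖c‖ + r)) (b := ‖c‖ + r))
    ).of_isClosed_subset (isClosed_medianHyperplanes I) ?_
  rintro ⟨a, b⟩ hab
  have hb := abs_le.1 (h a b hab)
  have hac := abs_le.1 ((abs_real_inner_le_norm a c).trans_eq (by rw [hab.1, one_mul]))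
  exact ⟨mem_sphere_zero_iff_norm.2 hab.1, by linarith, by linarith⟩

theorem IsYolk.exists_mem_tangentMedianDirections_inner_nonpos {c : Pt k} {r : ℝ}
    (hyolk : IsYolk I c r) (v : Pt k) : ∃ a ∈ tangentMedianDirections I c r, ⟪a, v⟫ ≤ 0 := by
  by_contra! hpos
  have hM := isCompact_medianHyperplanes_of_forall_abs_le hyolk.1
  obtain ⟨t, ht, htilt⟩ := hM.exists_pos_forall_add_mul_pos
    (f := fun p => ⟪p.1, c⟫ - p.2 + r) (g := fun p => ⟪p.1, v⟫) (by fun_prop) (by fun_prop)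
    (fun p hp => by linarith [(abs_le.1 (hyolk.1 _ _ hp)).1])
    (fun p hp hp0 => hpos p.1 (by
      rwa [tangentMedianDirections, Set.mem_ofPred_eq, show ⟪p.1, c⟫ + r = p.2 by linarith]))
  obtain ⟨δ, hδ, hδle⟩ := hM.exists_forall_le' (by fun_prop) htilt
  have := hyolk.2 (c + t • v) (r - δ) fun a b hab => by
    have h₁ := hδle (a, b) hab
    have h₂ := hδle (-a, -b) hab.neg
    simp only [inner_neg_left] at h₂
    rw [abs_le, inner_add_right, real_inner_smul_right]
    constructor <;> linarith
  linarith

end Median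

theorem three_tangent_median_hyperplanes_general (I : Finset (Pt 2))
    (c : Pt 2) (r : ℝ) (hyolk : IsYolk I c r) :
    ∃ a₁ a₂ a₃ : Pt 2, ‖a₁‖ = 1 ∧ ‖a₂‖ = 1 ∧ ‖a₃‖ = 1 ∧
      IsMedianHyperplane I a₁ (⟪a₁, c⟫ + r) ∧
      IsMedianHyperplane I a₂ (⟪a₂, c⟫ + r) ∧
      IsMedianHyperplane I a₃ (⟪a₃, c⟫ + r) ∧
      ∀ α : Pt 2, 0 ≤ ⟪a₁, α⟫ ∨ 0 ≤ ⟪a₂, α⟫ ∨ 0 ≤ ⟪a₃, α⟫ := by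
  have h0 := exists_fin_finrank_succ_of_mem_convexHull <|
    zero_mem_convexHull_of_forall_exists_inner_nonpos
      (isCompact_tangentMedianDirections I c r)
      hyolk.exists_mem_tangentMedianDirections_inner_nonpos
  rw [finrank_euclideanSpace_fin] at h0
  obtain ⟨w, hw, a, ha, hwa⟩ := h0
  refine ⟨a 0, a 1, a 2, (ha 0).1, (ha 1).1, (ha 2).1, ha 0, ha 1, ha 2, fun α => ?_⟩
  simpa [Fin.exists_fin_succ] using
    exists_inner_nonneg_of_sum_smul_eq_zero hw hwa α

/-- If `|I|` is odd and `B(c,r)` is a yolk of `I ⊆ ℝ²` with `r > 0`, then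
there are three unit vectors `a₁, a₂, a₃` such that each `(aᵢ, ⟪aᵢ,c⟫ + r)` is a median
hyperplane of `I` (hence tangent to `B(c,r)`), and every `α ∈ ℝ²` satisfies `⟪aᵢ,α⟫ ≥ 0`
for some `i`. -/
theorem three_tangent_median_hyperplanes (I : Finset (Pt 2)) (hodd : Odd I.card)
    (c : Pt 2) (r : ℝ) (hyolk : IsYolk I c r) (hr : 0 < r) :
    ∃ a₁ a₂ a₃ : Pt 2, ‖a₁‖ = 1 ∧ ‖a₂‖ = 1 ∧ ‖a₃‖ = 1 ∧
      IsMedianHyperplane I a₁ (⟪a₁, c⟫ + r) ∧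
      IsMedianHyperplane I a₂ (⟪a₂, c⟫ + r) ∧
      IsMedianHyperplane I a₃ (⟪a₃, c⟫ + r) ∧
      ∀ α : Pt 2, 0 ≤ ⟪a₁, α⟫ ∨ 0 ≤ ⟪a₂, α⟫ ∨ 0 ≤ ⟪a₃, α⟫ :=
  three_tangent_median_hyperplanes_general I c r hyolk
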